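/- arXiv:2007.07475 — 4 statements merged into one kernel-verified Lean document; each statement's English description precedes it below -/
import Mathlib

section
/- For every even n and every z ∈ {1, 2, …, n−2}, there exists a 2-regular (n, n, z+1, n(n−z−1)/2) placement delivery array. (It is obtained from the diagonal 2-PDA of size n by deleting the integers corresponding to z disjoint 1-factors of K_n.) -/
open Finset

/-- Number of stars (`none`) in column `k` of the array `P`. -/
def colStars {f K : ℕ} (P : Fin f → Fin K → Option ℕ) (k : Fin K) : ℕ :=
  (Finset.univ.filter fun j => P j k = none).card

/-- `P` is a `(K, f, Z, S)` placement delivery array: an `f × K` array over `{∗} ∪ S`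
(`none` encodes `∗`) with exactly `Z` stars in each column, every integer of `S`
occurring at least once (and all integer entries lying in `S`), satisfying the
Blackburn property. -/
def IsPDA {f K : ℕ} (P : Fin f → Fin K → Option ℕ) (Z : ℕ) (S : Finset ℕ) : Prop :=
  (∀ k, colStars P k = Z) ∧
  (∀ s ∈ S, ∃ j k, P j k = some s) ∧
  (∀ j k s, P j k = some s → s ∈ S) ∧
  (∀ j₁ k₁ j₂ k₂ s, (j₁, k₁) ≠ (j₂, k₂) →
    P j₁ k₁ = some s → P j₂ k₂ = some s → P j₁ k₂ = none ∧ P j₂ k₁ = none)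

/-- Every integer of `S` appears exactly `g` times in the array `P`. -/
def IsRegularPDA {f K : ℕ} (P : Fin f → Fin K → Option ℕ) (S : Finset ℕ) (g : ℕ) : Prop :=
  ∀ s ∈ S, ((Finset.univ : Finset (Fin f × Fin K)).filter
    (fun jk => P jk.1 jk.2 = some s)).card = g

/-- `P₀` and `P₁` are Blackburn-compatible with respect to `Pstar`. -/
def BBCompat {n m : ℕ} (P₀ P₁ Pstar : Fin n → Fin m → Option ℕ) : Prop :=
  ∀ i₀ j₀ i₁ j₁ s, P₀ i₀ j₀ = some s → P₁ i₁ j₁ = some s →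
    Pstar i₀ j₁ = none ∧ Pstar i₁ j₀ = none

/-- `Ig n t` is the `n × n` array with the integer `t` on the main diagonal and `∗`
elsewhere. -/
def Ig (n t : ℕ) : Fin n → Fin n → Option ℕ := fun i j => if i = j then some t else none

/-- Block-row index of a global index for an array built from `a × a` grids of `b`-sized
blocks. -/
def blkIdx {a b : ℕ} (j : Fin (a * b)) : Fin a :=
  ⟨(j : ℕ) / b, Nat.div_lt_of_lt_mul (Nat.mul_comm a b ▸ j.isLt)⟩

/-- Within-block index of a global index. -/
def inIdx {a b : ℕ} (j : Fin (a * b)) : Fin b :=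
  ⟨(j : ℕ) % b, Nat.mod_lt _ (by
    rcases Nat.eq_zero_or_pos b with h | h
    · exact absurd j.isLt (by simp [h])
    · exact h)⟩

/-! Label the edges of a `d`-regular graph `G` on `n` vertices by `0, …, nd/2 - 1` and put the
label of the edge `{j, k}` in cells `(j, k)` and `(k, j)` of an `n × n` array, with stars at
the non-edges. Each label occurs exactly twice, each column has `n - d` stars, and the two
cells carrying a label `s(j, k)` see the stars `(j, j)`, `(k, k)`: this is a 2-regular
`(n, n, n - d, nd/2)` PDA. For even `n`, the complete graph `K_n` has a 1-factorization into
`n - 1` perfect matchings, and deleting `z` of them leaves an `(n - 1 - z)`-regular graph. -/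

namespace SimpleGraph

theorem IsRegularOfDegree.card_edgeFinset {V : Type*} [Fintype V] {G : SimpleGraph V}
    [DecidableRel G.Adj] {d : ℕ} (hG : G.IsRegularOfDegree d) :
    #G.edgeFinset = Fintype.card V * d / 2 := by
  have h := G.sum_degrees_eq_twice_card_edges
  simp only [hG.degree_eq, sum_const, card_univ, smul_eq_mul] at h
  omega

variable {n : ℕ} (G : SimpleGraph (Fin n)) [DecidableRel G.Adj]

noncomputable def edgeLabelArray (j k : Fin n) : Option ℕ :=
  if h : G.Adj j k then some (G.edgeFinset.equivFin ⟨s(j, k), G.mem_edgeFinset.2 h⟩) else none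

variable {G}

lemma edgeLabelArray_eq_none_iff {j k : Fin n} : G.edgeLabelArray j k = none ↔ ¬ G.Adj j k := by
  unfold edgeLabelArray
  split_ifs with h <;> simp [h]

lemma edgeLabelArray_eq_some_iff {j k : Fin n} {s : ℕ} :
    G.edgeLabelArray j k = some s ↔
      ∃ h : G.Adj j k, (G.edgeFinset.equivFin ⟨s(j, k), G.mem_edgeFinset.2 h⟩ : ℕ) = s := by
  unfold edgeLabelArray
  split_ifs with h <;> simp [h]

lemma edgeLabelArray_comm (j k : Fin n) : G.edgeLabelArray j k = G.edgeLabelArray k j := by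
  unfold edgeLabelArray
  by_cases h : G.Adj j k
  · rw [dif_pos h, dif_pos h.symm]
    simp only [Sym2.eq_swap]
  · rw [dif_neg h, dif_neg (mt G.adj_symm h)]

lemma sym2_eq_of_edgeLabelArray_eq_some {j k j' k' : Fin n} {s : ℕ}
    (h : G.edgeLabelArray j k = some s) (h' : G.edgeLabelArray j' k' = some s) :
    s(j, k) = s(j', k') := by
  obtain ⟨hadj, rfl⟩ := edgeLabelArray_eq_some_iff.1 h
  obtain ⟨_, he⟩ := edgeLabelArray_eq_some_iff.1 h'
  exact congrArg Subtype.val (G.edgeFinset.equivFin.injective (Fin.ext he)).symm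

lemma exists_adj_edgeLabelArray_eq_some {s : ℕ} (hs : s < #G.edgeFinset) :
    ∃ j k, G.Adj j k ∧ G.edgeLabelArray j k = some s := by
  obtain ⟨⟨e, he⟩, hlabel⟩ := G.edgeFinset.equivFin.surjective ⟨s, hs⟩
  induction e using Sym2.ind with
  | h j k =>
    have hadj : G.Adj j k := G.mem_edgeFinset.1 he
    exact ⟨j, k, hadj, edgeLabelArray_eq_some_iff.2 ⟨hadj, congrArg Fin.val hlabel⟩⟩

theorem isPDA_edgeLabelArray {d : ℕ} (hG : G.IsRegularOfDegree d) :
    IsPDA G.edgeLabelArray (n - d) (range #G.edgeFinset) := by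
  refine ⟨fun k => ?_, fun s hs => ?_, fun j k s h => ?_, ?_⟩
  · have hdeg : #{j | G.Adj j k} = d := by
      rw [← hG.degree_eq k, ← card_neighborFinset_eq_degree, neighborFinset_eq_filter]
      simp only [G.adj_comm k]
    have hsplit := card_filter_add_card_filter_not (s := univ) (fun j => G.Adj j k)
    simp only [colStars, edgeLabelArray_eq_none_iff, card_univ, Fintype.card_fin] at hsplit ⊢
    omega
  · obtain ⟨j, k, -, h⟩ := exists_adj_edgeLabelArray_eq_some (mem_range.1 hs)
    exact ⟨j, k, h⟩
  · obtain ⟨-, rfl⟩ := edgeLabelArray_eq_some_iff.1 h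
    exact mem_range.2 (Fin.isLt _)
  · intro j₁ k₁ j₂ k₂ s hne h₁ h₂
    rcases Sym2.eq_iff.1 (sym2_eq_of_edgeLabelArray_eq_some h₁ h₂) with ⟨rfl, rfl⟩ | ⟨rfl, rfl⟩
    · exact absurd rfl hne
    · exact ⟨edgeLabelArray_eq_none_iff.2 (G.loopless.irrefl _),
        edgeLabelArray_eq_none_iff.2 (G.loopless.irrefl _)⟩

theorem isRegularPDA_edgeLabelArray : IsRegularPDA G.edgeLabelArray (range #G.edgeFinset) 2 := by
  intro s hs
  obtain ⟨j, k, hadj, h⟩ := exists_adj_edgeLabelArray_eq_some (mem_range.1 hs)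
  have : (univ : Finset (Fin n × Fin n)).filter (fun q => G.edgeLabelArray q.1 q.2 = some s) =
      {(j, k), (k, j)} := by
    ext ⟨j', k'⟩
    simp only [mem_filter, mem_univ, true_and, mem_insert, mem_singleton]
    refine ⟨fun h' => ?_, ?_⟩
    · simpa only [Prod.mk.injEq] using Sym2.eq_iff.1 (sym2_eq_of_edgeLabelArray_eq_some h' h)
    · rintro (h' | h') <;> simp only [Prod.mk.injEq] at h' <;> obtain ⟨rfl, rfl⟩ := h'
      · exact h
      · rw [edgeLabelArray_comm, h]
  rw [this, card_pair_eq_two_iff]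
  exact fun h => hadj.ne (congrArg Prod.fst h)

end SimpleGraph

/-- Colour of the edge `{i, j}` of `K_{m+1}` in the round-robin 1-factorization: the vertex `m`
plays the point at infinity and the others are read in `ZMod m`. For odd `m` each colour class
is a perfect matching. -/
def roundRobinColor (m i j : ℕ) : ℕ :=
  if i = m then 2 * j % m else if j = m then 2 * i % m else (i + j) % m

lemma roundRobinColor_comm (m i j : ℕ) : roundRobinColor m i j = roundRobinColor m j i := by
  unfold roundRobinColor
  split_ifs <;> grind

lemma roundRobinColor_lt {m : ℕ} (hm : 0 < m) (i j : ℕ) : roundRobinColor m i j < m := by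
  unfold roundRobinColor
  split_ifs <;> exact Nat.mod_lt _ hm

lemma roundRobinColor_injOn {m k : ℕ} (hm : Odd m) (hk : k ≤ m) :
    Set.InjOn (roundRobinColor m · k) {j | j ≤ m ∧ j ≠ k} := by
  have cancel_add {a b : ℕ} (ha : a < m) (hb : b < m) (h : a + k ≡ b + k [MOD m]) : a = b :=
    (Nat.ModEq.add_right_cancel' k h).eq_of_lt_of_lt ha hb
  rintro j ⟨hjm, hjk⟩ j' ⟨hj'm, hj'k⟩ h
  simp only [roundRobinColor] at h
  rcases hk.lt_or_eq with hk | hk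
  · rcases hjm.lt_or_eq with hj | hj <;> rcases hj'm.lt_or_eq with hj' | hj'
    · simp only [hj.ne, hj'.ne, hk.ne, if_false] at h
      exact cancel_add hj hj' h
    · simp only [hj.ne, hj', hk.ne, if_false, if_true] at h
      exact absurd (cancel_add hj hk (by rw [← two_mul]; exact h)) hjk
    · simp only [hj'.ne, hj, hk.ne, if_false, if_true] at h
      exact absurd (cancel_add hj' hk (by rw [← two_mul]; exact h.symm)) hj'k
    · exact hj.trans hj'.symm
  · subst hk
    have hj : j < k := lt_of_le_of_ne hjm hjk
    have hj' : j' < k := lt_of_le_of_ne hj'm hj'k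
    simp only [hj.ne, hj'.ne, if_false, if_true] at h
    exact (Nat.ModEq.cancel_left_of_coprime hm.coprime_two_right h).eq_of_lt_of_lt hj hj'

namespace SimpleGraph

def deleteRoundRobinFactors (n z : ℕ) : SimpleGraph (Fin n) where
  Adj j k := j ≠ k ∧ z ≤ roundRobinColor (n - 1) j k
  symm := ⟨fun j k h => ⟨h.1.symm, roundRobinColor_comm (n - 1) j k ▸ h.2⟩⟩
  loopless := ⟨fun _ h => h.1 rfl⟩

instance (n z : ℕ) : DecidableRel (deleteRoundRobinFactors n z).Adj :=
  fun _ _ => inferInstanceAs (Decidable (_ ∧ _))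

theorem isRegularOfDegree_deleteRoundRobinFactors {n : ℕ} (hn : Even n) (z : ℕ) :
    (deleteRoundRobinFactors n z).IsRegularOfDegree (n - 1 - z) := by
  intro k
  have hm : Odd (n - 1) := by
    obtain ⟨r, hr⟩ := hn
    exact ⟨r - 1, by have := k.isLt; omega⟩
  set color : Fin n → ℕ := fun j => roundRobinColor (n - 1) j k
  have hinj : Set.InjOn color ↑(univ.erase k) := fun j hj j' hj' h =>
    Fin.ext <| roundRobinColor_injOn hm (Nat.le_sub_one_of_lt k.isLt)
      ⟨Nat.le_sub_one_of_lt j.isLt, by simpa [Fin.val_ne_iff] using hj⟩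
      ⟨Nat.le_sub_one_of_lt j'.isLt, by simpa [Fin.val_ne_iff] using hj'⟩ h
  have himage : (univ.erase k).image color = range (n - 1) := by
    refine eq_of_subset_of_card_le (fun r hr => ?_) ?_
    · obtain ⟨j, -, rfl⟩ := mem_image.1 hr
      exact mem_range.2 (roundRobinColor_lt hm.pos _ _)
    · rw [card_image_of_injOn hinj, card_erase_of_mem (mem_univ k), card_range, card_univ,
        Fintype.card_fin]
  have hnbr : (deleteRoundRobinFactors n z).neighborFinset k =
      {j ∈ univ.erase k | z ≤ color j} := by
    ext j
    simp only [mem_neighborFinset, adj_comm _ k, mem_filter, mem_erase,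
      mem_univ, and_true]
    rfl
  rw [← card_neighborFinset_eq_degree, hnbr, ← card_image_of_injOn (hinj.mono (filter_subset _ _)),
    ← filter_image, himage, range_eq_Ico, Ico_filter_le, Nat.card_Ico, max_eq_right z.zero_le]

end SimpleGraph

/-- For every even `n` and every `z ∈ {1, …, n−2}` there exists a
2-regular `(n, n, z+1, n(n−z−1)/2)` placement delivery array. -/
theorem stmt_4 (n z : ℕ) (hn : Even n) (hz1 : 1 ≤ z) (hz2 : z ≤ n - 2) :
    ∃ P : Fin n → Fin n → Option ℕ,
      IsPDA P (z + 1) (Finset.range (n * (n - z - 1) / 2)) ∧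
      IsRegularPDA P (Finset.range (n * (n - z - 1) / 2)) 2 := by
  have hreg := SimpleGraph.isRegularOfDegree_deleteRoundRobinFactors hn z
  have hstars : n - (n - 1 - z) = z + 1 := by omega
  have hedges : #(SimpleGraph.deleteRoundRobinFactors n z).edgeFinset = n * (n - z - 1) / 2 := by
    rw [hreg.card_edgeFinset, Fintype.card_fin, Nat.sub_right_comm]
  exact ⟨_, hstars ▸ hedges ▸ SimpleGraph.isPDA_edgeLabelArray hreg, hedges ▸ SimpleGraph.isRegularPDA_edgeLabelArray⟩
end

section
/- For every odd n and every z ∈ {1, 2, …, (n−3)/2}, there exists a 2-regular (n, n, 2z+1, n(n−2z−1)/2) placement delivery array. (It is obtained from the diagonal 2-PDA of size n by deleting the integers corresponding to z edge-disjoint Hamiltonian cycles of K_n.) -/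
open Finset

def dd (n j k : ℕ) : ℕ := if j ≤ k then k - j else n + k - j

def oplusA (n v d : ℕ) : ℕ := if v + d < n then v + d else v + d - n

def lab (n z j k : ℕ) : Option ℕ :=
  if z + 1 ≤ dd n j k ∧ dd n j k + z + 1 ≤ n then
    (if 2 * dd n j k < n then some ((dd n j k - z - 1) * n + j)
     else some ((n - dd n j k - z - 1) * n + k))
  else none

lemma dd_lt (n j k : ℕ) (hj : j < n) (hk : k < n) : dd n j k < n := by
  unfold dd; split <;> omega

lemma oplusA_lt (n v d : ℕ) (hv : v < n) (hd : d < n) : oplusA n v d < n := by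
  unfold oplusA; split <;> omega

lemma oplusA_ne (n v d : ℕ) (hv : v < n) (hd1 : 1 ≤ d) (hd : d < n) : oplusA n v d ≠ v := by
  unfold oplusA; split <;> omega

lemma dd_oplusA (n v d : ℕ) (hv : v < n) (hd1 : 1 ≤ d) (hd : d < n) :
    dd n v (oplusA n v d) = d ∧ dd n (oplusA n v d) v = n - d := by
  unfold dd oplusA; split_ifs <;> omega

lemma oplusA_dd (n j k : ℕ) (hj : j < n) (hk : k < n) (h1 : 1 ≤ dd n j k) :
    oplusA n j (dd n j k) = k ∧ oplusA n k (n - dd n j k) = j := by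
  unfold dd oplusA; split_ifs <;> omega

lemma mul_add_inj {n a b v w : ℕ} (hv : v < n) (hw : w < n)
    (h : a * n + v = b * n + w) : a = b ∧ v = w := by
  have hn : 0 < n := by omega
  have e1 : ∀ c u : ℕ, u < n → (c * n + u) / n = c := by
    intro c u hu
    rw [add_comm, Nat.add_mul_div_right _ _ hn, Nat.div_eq_of_lt hu, Nat.zero_add]
  have e2 : ∀ c u : ℕ, u < n → (c * n + u) % n = u := by
    intro c u hu
    rw [add_comm, Nat.add_mul_mod_self_right, Nat.mod_eq_of_lt hu]
  constructor
  · rw [← e1 a v hv, ← e1 b w hw, h]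
  · rw [← e2 a v hv, ← e2 b w hw, h]

lemma lab_none_iff (n z j k : ℕ) :
    lab n z j k = none ↔ ¬(z + 1 ≤ dd n j k ∧ dd n j k + z + 1 ≤ n) := by
  unfold lab; split_ifs with h1 h2 <;> simp_all

lemma lab_diag (n z x : ℕ) : lab n z x x = none := by
  have h : dd n x x = 0 := by unfold dd; simp
  rw [lab_none_iff]; omega

lemma lab_some_iff (n z j k s : ℕ) (hodd : n % 2 = 1) (hz : 2 * z + 3 ≤ n)
    (hj : j < n) (hk : k < n) :
    lab n z j k = some s ↔
      ∃ d v, z + 1 ≤ d ∧ 2 * d < n ∧ v < n ∧ s = (d - z - 1) * n + v ∧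
        ((j = v ∧ k = oplusA n v d) ∨ (k = v ∧ j = oplusA n v d)) := by
  have hddlt := dd_lt n j k hj hk
  unfold lab
  split_ifs with h1 h2
  · have h0 : 1 ≤ dd n j k := by omega
    obtain ⟨hop1, hop2⟩ := oplusA_dd n j k hj hk h0
    constructor
    · intro h
      exact ⟨dd n j k, j, h1.1, h2, hj, (Option.some.inj h).symm, Or.inl ⟨rfl, hop1.symm⟩⟩
    · rintro ⟨d, v, hd1, hd2, hv, hs, (⟨rfl, rfl⟩ | ⟨rfl, rfl⟩)⟩
      · have hdd : dd n j (oplusA n j d) = d := (dd_oplusA n j d hj (by omega) (by omega)).1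
        rw [hdd, hs]
      · have hdd : dd n (oplusA n k d) k = n - d := (dd_oplusA n k d hk (by omega) (by omega)).2
        omega
  · have h0 : 1 ≤ dd n j k := by omega
    obtain ⟨hop1, hop2⟩ := oplusA_dd n j k hj hk h0
    constructor
    · intro h
      exact ⟨n - dd n j k, k, by omega, by omega, hk, (Option.some.inj h).symm,
        Or.inr ⟨rfl, hop2.symm⟩⟩
    · rintro ⟨d, v, hd1, hd2, hv, hs, (⟨rfl, rfl⟩ | ⟨rfl, rfl⟩)⟩
      · have hdd : dd n j (oplusA n j d) = d := (dd_oplusA n j d hj (by omega) (by omega)).1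
        omega
      · have hdd : dd n (oplusA n k d) k = n - d := (dd_oplusA n k d hk (by omega) (by omega)).2
        have heq : n - dd n (oplusA n k d) k = d := by omega
        rw [heq, hs]
  · constructor
    · intro h; exact absurd h (by simp)
    · rintro ⟨d, v, hd1, hd2, hv, hs, (⟨rfl, rfl⟩ | ⟨rfl, rfl⟩)⟩
      · have hdd : dd n j (oplusA n j d) = d := (dd_oplusA n j d hj (by omega) (by omega)).1
        omega
      · have hdd : dd n (oplusA n k d) k = n - d := (dd_oplusA n k d hk (by omega) (by omega)).2
        omega

lemma col_count (n z k : ℕ) (hz : 2 * z + 3 ≤ n) (hk : k < n) :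
    ((univ : Finset (Fin n)).filter fun j => lab n z j.1 k = none).card = 2 * z + 1 := by
  have hbij : ((univ : Finset (Fin n)).filter fun j => lab n z j.1 k = none).card
      = ((range (z + 1)) ∪ (Finset.Ico (n - z) n)).card := by
    apply Finset.card_bij' (i := fun j _ => dd n j.1 k)
      (j := fun δ hδ => (⟨if δ ≤ k then k - δ else n + k - δ, by split <;> omega⟩ : Fin n))
    case hi =>
      intro a ha
      rw [Finset.mem_filter] at ha
      have h1 := (lab_none_iff n z a.1 k).mp ha.2
      have h2 := dd_lt n a.1 k a.isLt hk
      simp only [Finset.mem_union, Finset.mem_range, Finset.mem_Ico]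
      omega
    case hj =>
      intro a ha
      simp only [Finset.mem_union, Finset.mem_range, Finset.mem_Ico] at ha
      simp only [Finset.mem_filter, Finset.mem_univ, true_and]
      show lab n z (if a ≤ k then k - a else n + k - a) k = none
      have hdd : dd n (if a ≤ k then k - a else n + k - a) k = a := by
        unfold dd; split_ifs <;> omega
      rw [lab_none_iff, hdd]; omega
    case left_inv =>
      intro a ha
      apply Fin.ext
      have h2 := dd_lt n a.1 k a.isLt hk
      show (if dd n a.1 k ≤ k then k - dd n a.1 k else n + k - dd n a.1 k) = a.1
      unfold dd; split_ifs <;> omega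
    case right_inv =>
      intro a ha
      simp only [Finset.mem_union, Finset.mem_range, Finset.mem_Ico] at ha
      show dd n (if a ≤ k then k - a else n + k - a) k = a
      unfold dd; split_ifs <;> omega
  have hdisj : Disjoint (range (z + 1)) (Finset.Ico (n - z) n) := by
    simp only [Finset.disjoint_left, Finset.mem_range, Finset.mem_Ico]
    intro a ha; omega
  rw [hbij, Finset.card_union_of_disjoint hdisj, Finset.card_range, Nat.card_Ico]
  omega

lemma decompA (n M s : ℕ) (hn : 0 < n) (hs : s < n * M) :
    ∃ q v, q < M ∧ v < n ∧ s = q * n + v := by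
  refine ⟨s / n, s % n, ?_, Nat.mod_lt _ hn, ?_⟩
  · rw [Nat.div_lt_iff_lt_mul hn]; exact Nat.mul_comm n M ▸ hs
  · rw [Nat.mul_comm]; exact (Nat.div_add_mod s n).symm

/-- For every odd `n` and every `z ∈ {1, …, (n−3)/2}` there exists a
2-regular `(n, n, 2z+1, n(n−2z−1)/2)` placement delivery array. -/
theorem stmt_5 (n z : ℕ) (hn : Odd n) (hz1 : 1 ≤ z) (hz2 : z ≤ (n - 3) / 2) :
    ∃ P : Fin n → Fin n → Option ℕ,
      IsPDA P (2 * z + 1) (Finset.range (n * (n - 2 * z - 1) / 2)) ∧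
      IsRegularPDA P (Finset.range (n * (n - 2 * z - 1) / 2)) 2 := by
  have hodd : n % 2 = 1 := Nat.odd_iff.mp hn
  have hzn : 2 * z + 3 ≤ n := by omega
  have hn0 : 0 < n := by omega
  set M := (n - 1) / 2 - z with hM
  have hMz : 1 ≤ M := by omega
  have hC : n * (n - 2 * z - 1) / 2 = n * M := by
    have h1 : n - 2 * z - 1 = 2 * M := by omega
    rw [h1, show n * (2 * M) = 2 * (n * M) by ring,
      Nat.mul_div_cancel_left _ (by norm_num : 0 < 2)]
  refine ⟨fun j k => lab n z j.1 k.1, ⟨?_, ?_, ?_, ?_⟩, ?_⟩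
  · -- column stars
    intro k
    show ((univ : Finset (Fin n)).filter fun j => lab n z j.1 k.1 = none).card = 2 * z + 1
    exact col_count n z k.1 hzn k.isLt
  · -- every integer occurs
    intro s hs
    rw [Finset.mem_range, hC] at hs
    obtain ⟨q, v, hq, hv, hsqv⟩ := decompA n M s hn0 hs
    have hd2 : 2 * (q + z + 1) < n := by omega
    have hw : oplusA n v (q + z + 1) < n := oplusA_lt _ _ _ hv (by omega)
    refine ⟨⟨v, hv⟩, ⟨oplusA n v (q + z + 1), hw⟩, ?_⟩
    show lab n z v (oplusA n v (q + z + 1)) = some s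
    rw [lab_some_iff n z _ _ s hodd hzn hv hw]
    refine ⟨q + z + 1, v, by omega, hd2, hv, ?_, Or.inl ⟨rfl, rfl⟩⟩
    rw [show q + z + 1 - z - 1 = q by omega]
    exact hsqv
  · -- entries lie in S
    rintro j k s h
    rw [show ((fun j k : Fin n => lab n z j.1 k.1) j k = some s) =
      (lab n z j.1 k.1 = some s) from rfl,
      lab_some_iff n z j.1 k.1 s hodd hzn j.isLt k.isLt] at h
    obtain ⟨d, v, hd1, hd2, hv, hs, -⟩ := h
    rw [Finset.mem_range, hC]
    have h2 : d - z - 1 + 1 ≤ M := by omega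
    calc s = (d - z - 1) * n + v := hs
      _ < (d - z - 1) * n + n := by omega
      _ = ((d - z - 1) + 1) * n := by ring
      _ ≤ M * n := Nat.mul_le_mul_right n h2
      _ = n * M := Nat.mul_comm _ _
  · -- Blackburn property
    rintro j₁ k₁ j₂ k₂ s hne h1 h2
    rw [show ((fun j k : Fin n => lab n z j.1 k.1) j₁ k₁ = some s) =
      (lab n z j₁.1 k₁.1 = some s) from rfl,
      lab_some_iff n z j₁.1 k₁.1 s hodd hzn j₁.isLt k₁.isLt] at h1
    rw [show ((fun j k : Fin n => lab n z j.1 k.1) j₂ k₂ = some s) =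
      (lab n z j₂.1 k₂.1 = some s) from rfl,
      lab_some_iff n z j₂.1 k₂.1 s hodd hzn j₂.isLt k₂.isLt] at h2
    obtain ⟨d, v, hd1, hd2, hv, hs, hc1⟩ := h1
    obtain ⟨d', v', hd1', hd2', hv', hs', hc2⟩ := h2
    obtain ⟨hdd, hvv⟩ := mul_add_inj hv hv' (hs.symm.trans hs')
    have hd' : d' = d := by omega
    subst hd'
    subst hvv
    rcases hc1 with ⟨e1, e2⟩ | ⟨e1, e2⟩ <;> rcases hc2 with ⟨f1, f2⟩ | ⟨f1, f2⟩
    · exact absurd (Prod.ext (Fin.ext (e1.trans f1.symm)) (Fin.ext (e2.trans f2.symm))) hne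
    · constructor
      · show lab n z j₁.1 k₂.1 = none
        rw [e1, f1]; exact lab_diag n z v
      · show lab n z j₂.1 k₁.1 = none
        rw [f2, e2]; exact lab_diag n z _
    · constructor
      · show lab n z j₁.1 k₂.1 = none
        rw [e2, f2]; exact lab_diag n z _
      · show lab n z j₂.1 k₁.1 = none
        rw [f1, e1]; exact lab_diag n z v
    · exact absurd (Prod.ext (Fin.ext (e2.trans f2.symm)) (Fin.ext (e1.trans f1.symm))) hne
  · -- 2-regularity
    intro s hs
    rw [Finset.mem_range, hC] at hs
    obtain ⟨q, v, hq, hv, hsqv⟩ := decompA n M s hn0 hs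
    set d := q + z + 1 with hddef
    have hd2 : 2 * d < n := by omega
    have hdn : d < n := by omega
    have hw : oplusA n v d < n := oplusA_lt _ _ _ hv hdn
    have hsd : s = (d - z - 1) * n + v := by
      rw [show d - z - 1 = q by omega]
      exact hsqv
    have hwv : oplusA n v d ≠ v := oplusA_ne n v d hv (by omega) hdn
    have hset : (univ : Finset (Fin n × Fin n)).filter
          (fun jk => lab n z jk.1.1 jk.2.1 = some s)
        = {((⟨v, hv⟩ : Fin n), (⟨oplusA n v d, hw⟩ : Fin n)),
           ((⟨oplusA n v d, hw⟩ : Fin n), (⟨v, hv⟩ : Fin n))} := by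
      ext ⟨j, k⟩
      simp only [Finset.mem_filter, Finset.mem_univ, true_and, Finset.mem_insert,
        Finset.mem_singleton, Prod.mk.injEq]
      rw [lab_some_iff n z j.1 k.1 s hodd hzn j.isLt k.isLt]
      constructor
      · rintro ⟨d', v', hd1', hd2', hv', hs', hc⟩
        obtain ⟨h4, h5⟩ := mul_add_inj hv' hv (hs'.symm.trans hsd)
        have hde : d' = d := by omega
        subst hde
        subst h5
        rcases hc with ⟨e1, e2⟩ | ⟨e1, e2⟩
        · exact Or.inl ⟨Fin.ext e1, Fin.ext e2⟩
        · exact Or.inr ⟨Fin.ext e2, Fin.ext e1⟩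
      · rintro (⟨e1, e2⟩ | ⟨e1, e2⟩)
        · refine ⟨d, v, by omega, hd2, hv, hsd, Or.inl ⟨?_, ?_⟩⟩
          · rw [e1]
          · rw [e2]
        · refine ⟨d, v, by omega, hd2, hv, hsd, Or.inr ⟨?_, ?_⟩⟩
          · rw [e2]
          · rw [e1]
    have hne2 : ((⟨v, hv⟩ : Fin n), (⟨oplusA n v d, hw⟩ : Fin n)) ≠
        ((⟨oplusA n v d, hw⟩ : Fin n), (⟨v, hv⟩ : Fin n)) := by
      intro h
      exact hwv (congrArg (fun p => (p.1 : ℕ)) h).symm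
    show ((univ : Finset (Fin n × Fin n)).filter
      (fun jk => lab n z jk.1.1 jk.2.1 = some s)).card = 2
    rw [hset, Finset.card_pair hne2]
end

section
/- (Basic lifting) Let P_b be a (K, f, Z, S_b) PDA and for each i ∈ S_b let P_i be an (m, n, e, S_i) PDA, where the sets S_i are pairwise disjoint. Form the array B by replacing every ∗ in P_b by the n×m all-∗ array and every integer i ∈ S_b by P_i. Then B is a (Km, fn, Zn + (f−Z)e, ∪_{i∈S_b} S_i) PDA. -/
open Finset

/-- Basic block lifting: every `∗` of the base array becomes an all-`∗` `n × m` block and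
every integer `i` becomes the constituent array `Pc i`. -/
def blockLift {K f m n : ℕ} (Pb : Fin f → Fin K → Option ℕ)
    (Pc : ℕ → Fin n → Fin m → Option ℕ) :
    Fin (f * n) → Fin (K * m) → Option ℕ :=
  fun j k =>
    match Pb (blkIdx j) (blkIdx k) with
    | none => none
    | some i => Pc i (inIdx j) (inIdx k)

/-!
Column `k` of the lifted array meets block row `J` in `n` stars when `Pb J (k / m)` is a star
and in the `e` stars of column `k % m` of `Pc i` when it is the integer `i`; summing over the
`Z` star rows and `f - Z` integer rows gives `Z * n + (f - Z) * e`. Since the `Si i` are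
disjoint, two equal integers of the lifted array come from the same constituent `Pc i`: either
they lie in one block, where the Blackburn property of `Pc i` applies, or in two distinct cells
of `Pb` carrying `i`, where that of `Pb` makes both crossing blocks entirely `∗`.
-/

section BlockIndex

variable {a b : ℕ}

theorem finProdFinEquiv_symm_eq_blkIdx_inIdx (j : Fin (a * b)) :
    finProdFinEquiv.symm j = (blkIdx j, inIdx j) := rfl

@[simp]
theorem blkIdx_finProdFinEquiv (p : Fin a × Fin b) : blkIdx (finProdFinEquiv p) = p.1 :=
  congrArg Prod.fst (finProdFinEquiv.symm_apply_apply p)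

@[simp]
theorem inIdx_finProdFinEquiv (p : Fin a × Fin b) : inIdx (finProdFinEquiv p) = p.2 :=
  congrArg Prod.snd (finProdFinEquiv.symm_apply_apply p)

theorem eq_iff_blkIdx_eq_and_inIdx_eq {j j' : Fin (a * b)} :
    j = j' ↔ blkIdx j = blkIdx j' ∧ inIdx j = inIdx j' := by
  rw [← finProdFinEquiv.symm.injective.eq_iff, finProdFinEquiv_symm_eq_blkIdx_inIdx, finProdFinEquiv_symm_eq_blkIdx_inIdx,
    Prod.mk.injEq]

theorem card_filter_eq_sum_blocks (p : Fin (a * b) → Prop) [DecidablePred p] :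
    #{j | p j} = ∑ J : Fin a, #{j : Fin b | p (finProdFinEquiv (J, j))} := by
  simp only [card_filter]
  rw [← Fintype.sum_prod_type']
  exact (Fintype.sum_equiv finProdFinEquiv _ _ fun _ => rfl).symm

end BlockIndex

def IsBlackburn {f K : ℕ} (P : Fin f → Fin K → Option ℕ) : Prop :=
  ∀ j₁ k₁ j₂ k₂ s, (j₁, k₁) ≠ (j₂, k₂) →
    P j₁ k₁ = some s → P j₂ k₂ = some s → P j₁ k₂ = none ∧ P j₂ k₁ = none

def EntriesIn {f K : ℕ} (P : Fin f → Fin K → Option ℕ) (S : Finset ℕ) : Prop :=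
  ∀ j k s, P j k = some s → s ∈ S

section BlockLift

variable {K f m n : ℕ} {Pb : Fin f → Fin K → Option ℕ} {Pc : ℕ → Fin n → Fin m → Option ℕ}

theorem blockLift_of_eq_none {j : Fin (f * n)} {k : Fin (K * m)}
    (h : Pb (blkIdx j) (blkIdx k) = none) : blockLift Pb Pc j k = none := by
  simp [blockLift, h]

theorem blockLift_of_eq_some {j : Fin (f * n)} {k : Fin (K * m)} {i : ℕ}
    (h : Pb (blkIdx j) (blkIdx k) = some i) :
    blockLift Pb Pc j k = Pc i (inIdx j) (inIdx k) := by
  simp [blockLift, h]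

theorem blockLift_eq_some_iff {j : Fin (f * n)} {k : Fin (K * m)} {s : ℕ} :
    blockLift Pb Pc j k = some s ↔
      ∃ i, Pb (blkIdx j) (blkIdx k) = some i ∧ Pc i (inIdx j) (inIdx k) = some s := by
  unfold blockLift
  cases Pb (blkIdx j) (blkIdx k) <;> simp

theorem card_blockLift_eq_none_on_block {Sb : Finset ℕ} {e : ℕ} (hmem : EntriesIn Pb Sb)
    (hPc : ∀ i ∈ Sb, ∀ l, colStars (Pc i) l = e) (J : Fin f) (k : Fin (K * m)) :
    #{j : Fin n | blockLift Pb Pc (finProdFinEquiv (J, j)) k = none} =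
      if Pb J (blkIdx k) = none then n else e := by
  rcases hJ : Pb J (blkIdx k) with _ | i
  · simp [blockLift_of_eq_none (Pc := Pc) (j := finProdFinEquiv (J, _)) (by simpa using hJ)]
  · have hblock (j : Fin n) : blockLift Pb Pc (finProdFinEquiv (J, j)) k = Pc i j (inIdx k) := by
      simpa using blockLift_of_eq_some (Pc := Pc) (j := finProdFinEquiv (J, j)) (by simpa using hJ)
    simp only [hblock, reduceCtorEq, if_false]
    exact hPc i (hmem J _ i hJ) (inIdx k)

theorem colStars_blockLift {Sb : Finset ℕ} {Z e : ℕ} (hPb : ∀ L, colStars Pb L = Z)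
    (hmem : EntriesIn Pb Sb) (hPc : ∀ i ∈ Sb, ∀ l, colStars (Pc i) l = e) (k : Fin (K * m)) :
    colStars (blockLift Pb Pc) k = Z * n + (f - Z) * e := by
  have hstars : #{J | Pb J (blkIdx k) = none} = Z := hPb (blkIdx k)
  have hints : #{J | ¬Pb J (blkIdx k) = none} = f - Z := by
    have := card_filter_add_card_filter_not (s := univ) fun J => Pb J (blkIdx k) = none
    simp only [card_univ, Fintype.card_fin] at this
    omega
  rw [colStars, card_filter_eq_sum_blocks]
  simp only [card_blockLift_eq_none_on_block hmem hPc, sum_ite, sum_const, smul_eq_mul,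
    hstars, hints]

theorem exists_blockLift_eq_some {Sb : Finset ℕ} {Si : ℕ → Finset ℕ}
    (hPb : ∀ i ∈ Sb, ∃ J L, Pb J L = some i) (hPc : ∀ i ∈ Sb, ∀ s ∈ Si i, ∃ j l, Pc i j l = some s)
    {s : ℕ} (hs : s ∈ Sb.biUnion Si) : ∃ j k, blockLift Pb Pc j k = some s := by
  obtain ⟨i, hi, hsi⟩ := mem_biUnion.1 hs
  obtain ⟨J, L, hJL⟩ := hPb i hi
  obtain ⟨j, l, hjl⟩ := hPc i hi s hsi
  refine ⟨finProdFinEquiv (J, j), finProdFinEquiv (L, l), ?_⟩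
  rw [blockLift_of_eq_some (by simpa using hJL)]
  simpa using hjl

theorem EntriesIn.blockLift {Sb : Finset ℕ} {Si : ℕ → Finset ℕ} (hPb : EntriesIn Pb Sb)
    (hPc : ∀ i ∈ Sb, EntriesIn (Pc i) (Si i)) : EntriesIn (blockLift Pb Pc) (Sb.biUnion Si) := by
  intro j k s h
  obtain ⟨i, hb, hc⟩ := blockLift_eq_some_iff.1 h
  have hi := hPb _ _ _ hb
  exact mem_biUnion.2 ⟨i, hi, hPc i hi _ _ _ hc⟩

theorem IsBlackburn.blockLift {Sb : Finset ℕ} {Si : ℕ → Finset ℕ} (hPb : IsBlackburn Pb)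
    (hmem : EntriesIn Pb Sb) (hPc : ∀ i ∈ Sb, IsBlackburn (Pc i))
    (hSi : ∀ i ∈ Sb, EntriesIn (Pc i) (Si i)) (hdisj : (Sb : Set ℕ).PairwiseDisjoint Si) :
    IsBlackburn (blockLift Pb Pc) := by
  intro j₁ k₁ j₂ k₂ s hne h₁ h₂
  obtain ⟨i, hb₁, hc₁⟩ := blockLift_eq_some_iff.1 h₁
  obtain ⟨i₂, hb₂, hc₂⟩ := blockLift_eq_some_iff.1 h₂
  have hi := hmem _ _ _ hb₁
  obtain rfl : i = i₂ := hdisj.elim_finset hi (hmem _ _ _ hb₂) s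
    (hSi i hi _ _ _ hc₁) (hSi i₂ (hmem _ _ _ hb₂) _ _ _ hc₂)
  by_cases hblock : (blkIdx j₁, blkIdx k₁) = (blkIdx j₂, blkIdx k₂)
  · obtain ⟨hJ, hL⟩ := Prod.mk.inj hblock
    have hin : (inIdx j₁, inIdx k₁) ≠ (inIdx j₂, inIdx k₂) := by
      simpa [eq_iff_blkIdx_eq_and_inIdx_eq, hJ, hL] using hne
    obtain ⟨hn₁, hn₂⟩ := hPc i hi _ _ _ _ s hin hc₁ hc₂
    exact ⟨(blockLift_of_eq_some (hL ▸ hb₁)).trans hn₁,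
      (blockLift_of_eq_some (hL ▸ hb₂)).trans hn₂⟩
  · obtain ⟨hn₁, hn₂⟩ := hPb _ _ _ _ i hblock hb₁ hb₂
    exact ⟨blockLift_of_eq_none hn₁, blockLift_of_eq_none hn₂⟩

end BlockLift

/-- **Basic lifting.** If `Pb` is a `(K, f, Z, Sb)` PDA and for each
`i ∈ Sb`, `Pc i` is an `(m, n, e, Si i)` PDA with the `Si i` pairwise disjoint, then
replacing each `∗` of `Pb` by the all-`∗` `n × m` block and each integer `i` by `Pc i`
gives a `(Km, fn, Zn + (f−Z)e, ⋃ᵢ Si i)` PDA. -/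
theorem stmt_6 {K f m n Z e : ℕ} (Sb : Finset ℕ)
    (Pb : Fin f → Fin K → Option ℕ) (hPb : IsPDA Pb Z Sb)
    (Si : ℕ → Finset ℕ) (Pc : ℕ → Fin n → Fin m → Option ℕ)
    (hPc : ∀ i ∈ Sb, IsPDA (Pc i) e (Si i))
    (hdisj : ∀ i ∈ Sb, ∀ i' ∈ Sb, i ≠ i' → Disjoint (Si i) (Si i')) :
    IsPDA (blockLift Pb Pc) (Z * n + (f - Z) * e) (Sb.biUnion Si) := by
  obtain ⟨hZ, hocc, hmem, hBB⟩ := hPb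
  exact ⟨colStars_blockLift hZ hmem fun i hi => (hPc i hi).1,
    fun _ => exists_blockLift_eq_some hocc fun i hi => (hPc i hi).2.1,
    EntriesIn.blockLift hmem fun i hi => (hPc i hi).2.2.1,
    IsBlackburn.blockLift hBB hmem (fun i hi => (hPc i hi).2.2.2)
      (fun i hi => (hPc i hi).2.2.1) hdisj⟩
end

section
/- (Tiling lifting parameters) For positive integers g, b with d = gcd(g, b), there exists a set of b (g, g, g−d, d²) (g/d)-regular PDAs Blackburn-compatible with respect to I_g(t), and the lifting of I_b by this set (placing the b compatible PDAs on the diagonal blocks and integer-disjoint copies of I_g on the off-diagonal blocks) is a g-regular (bg, bg, bg − b − d + 1, b(b + d − 1)) PDA. -/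
open Finset

namespace Stmt15Aux

/-! ### Label arithmetic -/

def pRes (d a r c : ℕ) : ℕ := if r = c then (r + d - a) % d else r
def qRes (d a r c : ℕ) : ℕ := if r = c then (r + d - a) % d else c
def lab (d a r c : ℕ) : ℕ := d * pRes d a r c + qRes d a r c
def rres (d a s : ℕ) : ℕ := if s / d = s % d then (s % d + a) % d else s / d
def cres (d a s : ℕ) : ℕ := if s / d = s % d then (s % d + a) % d else s % d

variable {d a a' r c s : ℕ}

lemma pRes_lt (hd : 0 < d) (hr : r < d) : pRes d a r c < d := by
  unfold pRes; split
  · exact Nat.mod_lt _ hd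
  · exact hr

lemma qRes_lt (hd : 0 < d) (hc : c < d) : qRes d a r c < d := by
  unfold qRes; split
  · exact Nat.mod_lt _ hd
  · exact hc

lemma lab_lt (hd : 0 < d) (hr : r < d) (hc : c < d) : lab d a r c < d * d := by
  have h1 := pRes_lt (a := a) (c := c) hd hr
  have h2 := qRes_lt (a := a) (r := r) hd hc
  calc d * pRes d a r c + qRes d a r c < d * pRes d a r c + d := by omega
    _ = d * (pRes d a r c + 1) := by ring
    _ ≤ d * d := Nat.mul_le_mul_left d (by omega)

lemma lab_div (hd : 0 < d) (hc : c < d) : lab d a r c / d = pRes d a r c := by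
  unfold lab
  rw [Nat.mul_add_div hd, Nat.div_eq_of_lt (qRes_lt hd hc)]
  omega

lemma lab_mod (hd : 0 < d) (hc : c < d) : lab d a r c % d = qRes d a r c := by
  unfold lab
  rw [Nat.mul_add_mod, Nat.mod_eq_of_lt (qRes_lt hd hc)]

lemma rres_lab (hd : 0 < d) (ha : a < d) (hr : r < d) (hc : c < d) :
    rres d a (lab d a r c) = r := by
  unfold rres
  rw [lab_div hd hc, lab_mod hd hc]
  unfold pRes qRes
  by_cases h : r = c
  · simp only [if_pos h]
    simp only [if_true, Nat.mod_add_mod]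
    have : r + d - a + a = r + d := by omega
    rw [this, Nat.add_mod_right, Nat.mod_eq_of_lt hr]
  · simp only [if_neg h]

lemma cres_lab (hd : 0 < d) (ha : a < d) (hr : r < d) (hc : c < d) :
    cres d a (lab d a r c) = c := by
  unfold cres
  rw [lab_div hd hc, lab_mod hd hc]
  unfold pRes qRes
  by_cases h : r = c
  · simp only [if_pos h]
    simp only [if_true, Nat.mod_add_mod]
    have : r + d - a + a = r + d := by omega
    rw [this, Nat.add_mod_right, Nat.mod_eq_of_lt hr, h]
  · simp only [if_neg h]

lemma rres_lt (hd : 0 < d) (hs : s < d * d) : rres d a s < d := by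
  unfold rres; split
  · exact Nat.mod_lt _ hd
  · exact Nat.div_lt_of_lt_mul (by rwa [Nat.mul_comm] at hs ⊢)

lemma cres_lt (hd : 0 < d) : cres d a s < d := by
  unfold cres; split
  · exact Nat.mod_lt _ hd
  · exact Nat.mod_lt _ hd

lemma lab_rres_cres (hd : 0 < d) (ha : a < d) (hs : s < d * d) :
    lab d a (rres d a s) (cres d a s) = s := by
  have hq : s % d < d := Nat.mod_lt _ hd
  unfold lab pRes qRes rres cres
  by_cases h : s / d = s % d
  · simp only [if_pos h, if_true]
    have key : ((s % d + a) % d + d - a) % d = s % d := by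
      have h1 : (s % d + a) % d + d - a = (s % d + a) % d + (d - a) := by omega
      rw [h1, Nat.mod_add_mod]
      have h2 : s % d + a + (d - a) = s % d + d := by omega
      rw [h2, Nat.add_mod_right, Nat.mod_mod_of_dvd _ dvd_rfl]
    rw [key]
    conv_rhs => rw [← Nat.div_add_mod s d]
    rw [h]
  · simp only [if_neg h, if_neg h]
    exact Nat.div_add_mod s d

lemma rres_ne_cres (hd : 0 < d) (ha : a < d) (ha' : a' < d) (hne : a ≠ a') :
    rres d a s ≠ cres d a' s := by
  unfold rres cres
  by_cases h : s / d = s % d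
  · simp only [if_pos h]
    intro he
    have : a % d = a' % d := Nat.ModEq.add_left_cancel' (s % d) he
    rw [Nat.mod_eq_of_lt ha, Nat.mod_eq_of_lt ha'] at this
    exact hne this
  · simp only [if_neg h]
    exact h

/-! ### Counting helpers -/

lemma card_filter_equiv {α β : Type*} [Fintype α] [Fintype β] [DecidableEq α] [DecidableEq β]
    (e : α ≃ β) (P : β → Prop) [DecidablePred P] :
    (univ.filter fun a => P (e a)).card = (univ.filter P).card := by
  apply Finset.card_equiv e
  simp

lemma card_filter_prod {α β : Type*} [Fintype α] [Fintype β] [DecidableEq α] [DecidableEq β]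
    (P : α → β → Prop) [∀ a, DecidablePred (P a)] [DecidablePred fun p : α × β => P p.1 p.2] :
    ((univ : Finset (α × β)).filter fun p => P p.1 p.2).card
      = ∑ a : α, (univ.filter (P a)).card := by
  rw [Finset.card_filter, Fintype.sum_prod_type]
  simp only [Finset.card_filter]
  exact Finset.sum_congr rfl fun a _ => Finset.sum_congr rfl fun c _ => by congr

lemma card_res {n D M : ℕ} (v : ℕ) (hD : 0 < D) (hn : n = D * M) (hv : v < M) :
    ((univ : Finset (Fin n)).filter fun j : Fin n => (j : ℕ) / D = v).card = D := by
  have key : ((univ : Finset (Fin n)).filter fun j : Fin n => (j : ℕ) / D = v).card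
      = ((univ : Finset (Fin D))).card := by
    have hlt : ∀ w : Fin D, v * D + (w : ℕ) < n := by
      intro w
      have h1 : (v + 1) * D = v * D + D := by ring
      have h2 : (v + 1) * D ≤ M * D := Nat.mul_le_mul_right D (by omega)
      have h3 : M * D = n := by rw [hn, Nat.mul_comm]
      have := w.isLt
      omega
    apply Finset.card_nbij' (i := fun j : Fin n => (⟨(j : ℕ) % D, Nat.mod_lt _ hD⟩ : Fin D))
      (j := fun w : Fin D => (⟨v * D + (w : ℕ), hlt w⟩ : Fin n))
    · intro a _; exact Finset.mem_univ _
    · intro w _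
      simp only [Finset.mem_coe, Finset.mem_filter, Finset.mem_univ, true_and]
      show (v * D + (w : ℕ)) / D = v
      rw [Nat.mul_comm v D, Nat.mul_add_div hD, Nat.div_eq_of_lt w.isLt]
      omega
    · intro j hj
      simp only [Finset.mem_coe, Finset.mem_filter, Finset.mem_univ, true_and] at hj
      apply Fin.ext
      show v * D + (j : ℕ) % D = (j : ℕ)
      conv_rhs => rw [← Nat.div_add_mod (j : ℕ) D]
      rw [hj, Nat.mul_comm]
    · intro w _
      apply Fin.ext
      show (v * D + (w : ℕ)) % D = (w : ℕ)
      rw [Nat.mul_comm v D, Nat.mul_add_mod, Nat.mod_eq_of_lt w.isLt]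
  rw [key]; simp

def toPair {b g : ℕ} (hg : 0 < g) : Fin (b * g) ≃ Fin b × Fin g where
  toFun x := (blkIdx x, inIdx x)
  invFun p := ⟨(p.1 : ℕ) * g + (p.2 : ℕ), by
    have h1 : ((p.1 : ℕ) + 1) * g = (p.1 : ℕ) * g + g := by ring
    have h2 : ((p.1 : ℕ) + 1) * g ≤ b * g := Nat.mul_le_mul_right g (by have := p.1.isLt; omega)
    have := p.2.isLt
    omega⟩
  left_inv x := by
    apply Fin.ext
    show ((x : ℕ) / g) * g + (x : ℕ) % g = (x : ℕ)
    conv_rhs => rw [← Nat.div_add_mod (x : ℕ) g]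
    ring
  right_inv p := by
    have hdiv : ((p.1 : ℕ) * g + (p.2 : ℕ)) / g = (p.1 : ℕ) := by
      rw [Nat.mul_comm (p.1 : ℕ) g, Nat.mul_add_div hg, Nat.div_eq_of_lt p.2.isLt]
      omega
    have hmod : ((p.1 : ℕ) * g + (p.2 : ℕ)) % g = (p.2 : ℕ) := by
      rw [Nat.mul_comm (p.1 : ℕ) g, Nat.mul_add_mod, Nat.mod_eq_of_lt p.2.isLt]
    apply Prod.ext
    · exact Fin.ext hdiv
    · exact Fin.ext hmod

lemma blk_toPair {b g : ℕ} (hg : 0 < g) (p : Fin b × Fin g) :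
    blkIdx ((toPair hg).symm p) = p.1 := congrArg Prod.fst ((toPair hg).right_inv p)

lemma in_toPair {b g : ℕ} (hg : 0 < g) (p : Fin b × Fin g) :
    inIdx ((toPair hg).symm p) = p.2 := congrArg Prod.snd ((toPair hg).right_inv p)

lemma card_diag {g : ℕ} :
    ((univ : Finset (Fin g × Fin g)).filter fun p => p.1 = p.2).card = g := by
  rw [card_filter_prod]
  simp [Finset.filter_eq]

/-! ### The construction -/

variable (D g b : ℕ)

def Qf (i : Fin b) (j k : Fin g) : Option ℕ :=
  if (j : ℕ) / D = (k : ℕ) / D then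
    some (D * D * ((i : ℕ) / D) +
      lab D ((i : ℕ) % D) ((j : ℕ) % D) ((k : ℕ) % D))
  else none

def Tf (i : Fin b) : Finset ℕ :=
  (Finset.range (D * D)).image fun s => D * D * ((i : ℕ) / D) + s

def τf (i j : Fin b) : ℕ := b * D + 1 + ((i : ℕ) * b + (j : ℕ))

def SLf : Finset ℕ :=
  Finset.range (b * D) ∪
    ((univ : Finset (Fin b × Fin b)).filter fun p => p.1 ≠ p.2).image fun p => τf D b p.1 p.2

def Lf : Fin (b * g) → Fin (b * g) → Option ℕ := fun x y =>
  if blkIdx x = blkIdx y then Qf D g b (blkIdx x) (inIdx x) (inIdx y)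
  else if inIdx x = inIdx y then some (τf D b (blkIdx x) (blkIdx y)) else none


/-! ### Properties of `Qf` -/

variable {D g b : ℕ} {m B : ℕ}

lemma DDB (hB : b = D * B) : D * D * B = b * D := by rw [hB]; ring

lemma iDltB (hD : 0 < D) (hB : b = D * B) (i : Fin b) : (i : ℕ) / D < B := by
  have h1 : (i : ℕ) / D < b / D := Nat.div_lt_div_of_lt_of_dvd ⟨B, hB⟩ i.isLt
  have h2 : b / D = B := by rw [hB, Nat.mul_div_cancel_left _ hD]
  omega

lemma Qval_lt (hD : 0 < D) (hB : b = D * B) (i : Fin b) {w : ℕ} (hw : w < D * D) :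
    D * D * ((i : ℕ) / D) + w < b * D := by
  have h1 := iDltB hD hB i
  have h2 : D * D * ((i : ℕ) / D + 1) ≤ D * D * B := Nat.mul_le_mul_left _ (by omega)
  have h3 : D * D * ((i : ℕ) / D + 1) = D * D * ((i : ℕ) / D) + D * D := by ring
  have h4 := DDB (D := D) hB
  omega

lemma Qf_eq_some_iff (i : Fin b) (j k : Fin g) (s : ℕ) :
    Qf D g b i j k = some s ↔ ((j : ℕ) / D = (k : ℕ) / D ∧
      s = D * D * ((i : ℕ) / D) + lab D ((i : ℕ) % D) ((j : ℕ) % D) ((k : ℕ) % D)) := by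
  unfold Qf
  split
  · simp only [Option.some_inj]
    tauto
  · simp only [reduceCtorEq, false_iff]  -- none = some s is False
    tauto

lemma Qf_extract (hD : 0 < D) (i : Fin b) (j k : Fin g) (s : ℕ)
    (h : Qf D g b i j k = some s) :
    (j : ℕ) / D = (k : ℕ) / D ∧
    s / (D * D) = (i : ℕ) / D ∧
    s % (D * D) = lab D ((i : ℕ) % D) ((j : ℕ) % D) ((k : ℕ) % D) ∧
    (j : ℕ) % D = rres D ((i : ℕ) % D) (s % (D * D)) ∧
    (k : ℕ) % D = cres D ((i : ℕ) % D) (s % (D * D)) := by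
  rw [Qf_eq_some_iff] at h
  obtain ⟨hdiv, hs⟩ := h
  have haD : (i : ℕ) % D < D := Nat.mod_lt _ hD
  have hrD : (j : ℕ) % D < D := Nat.mod_lt _ hD
  have hcD : (k : ℕ) % D < D := Nat.mod_lt _ hD
  have hlab := lab_lt (a := (i : ℕ) % D) hD hrD hcD
  have hDD : 0 < D * D := Nat.mul_pos hD hD
  have hsd : s / (D * D) = (i : ℕ) / D := by
    rw [hs, Nat.mul_add_div hDD, Nat.div_eq_of_lt hlab]
    omega
  have hsm : s % (D * D) = lab D ((i : ℕ) % D) ((j : ℕ) % D) ((k : ℕ) % D) := by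
    rw [hs, Nat.mul_add_mod, Nat.mod_eq_of_lt hlab]
  refine ⟨hdiv, hsd, hsm, ?_, ?_⟩
  · rw [hsm, rres_lab hD haD hrD hcD]
  · rw [hsm, cres_lab hD haD hrD hcD]

lemma Qf_val_mem (hD : 0 < D) (i : Fin b) (j k : Fin g) (s : ℕ)
    (h : Qf D g b i j k = some s) : s ∈ Tf D b i := by
  rw [Qf_eq_some_iff] at h
  obtain ⟨-, hs⟩ := h
  refine Finset.mem_image.2 ⟨lab D ((i : ℕ) % D) ((j : ℕ) % D) ((k : ℕ) % D), ?_, hs.symm⟩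
  exact Finset.mem_range.2 (lab_lt hD (Nat.mod_lt _ hD) (Nat.mod_lt _ hD))

lemma Tf_lt (hD : 0 < D) (hB : b = D * B) {i : Fin b} {s : ℕ} (h : s ∈ Tf D b i) :
    s < b * D := by
  obtain ⟨w, hw, rfl⟩ := Finset.mem_image.1 h
  exact Qval_lt hD hB i (Finset.mem_range.1 hw)

lemma Tf_mem_iff (hD : 0 < D) {i : Fin b} {s : ℕ} :
    s ∈ Tf D b i ↔ (s / (D * D) = (i : ℕ) / D ∧ s % (D * D) < D * D) := by
  have hDD : 0 < D * D := Nat.mul_pos hD hD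
  constructor
  · rintro h
    obtain ⟨w, hw, rfl⟩ := Finset.mem_image.1 h
    have hw' := Finset.mem_range.1 hw
    constructor
    · rw [Nat.mul_add_div hDD, Nat.div_eq_of_lt hw']
      omega
    · exact Nat.mod_lt _ hDD
  · rintro ⟨h1, h2⟩
    refine Finset.mem_image.2 ⟨s % (D * D), Finset.mem_range.2 h2, ?_⟩
    rw [← h1]
    exact Nat.div_add_mod s (D * D)

lemma Tf_card (hD : 0 < D) (i : Fin b) : (Tf D b i).card = D * D := by
  unfold Tf
  rw [Finset.card_image_of_injective _ (add_right_injective _), Finset.card_range]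

lemma colStars_Qf (hD : 0 < D) (hm : g = D * m) (i : Fin b) (k : Fin g) :
    colStars (Qf D g b i) k = g - D := by
  unfold colStars
  have hfc : (univ.filter fun j : Fin g => Qf D g b i j k = none)
      = univ.filter fun j : Fin g => ¬ ((j : ℕ) / D = (k : ℕ) / D) := by
    apply Finset.filter_congr
    intro j _
    unfold Qf
    split <;> simp_all
  rw [hfc]
  have hkm : (k : ℕ) / D < m := by
    have h1 : (k : ℕ) / D < g / D := Nat.div_lt_div_of_lt_of_dvd ⟨m, hm⟩ k.isLt
    have h2 : g / D = m := by rw [hm, Nat.mul_div_cancel_left _ hD]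
    omega
  have hcard := card_res (n := g) (D := D) (M := m) ((k : ℕ) / D) hD hm hkm
  have hsplit := Finset.card_filter_add_card_filter_not
    (s := (univ : Finset (Fin g))) (p := fun j : Fin g => (j : ℕ) / D = (k : ℕ) / D)
  simp only [Finset.card_univ, Fintype.card_fin] at hsplit
  omega

lemma Qf_surj (hD : 0 < D) (hm : g = D * m) (hmpos : 0 < m) (i : Fin b) {s : ℕ}
    (hs : s ∈ Tf D b i) : ∃ j k, Qf D g b i j k = some s := by
  have hDD : 0 < D * D := Nat.mul_pos hD hD
  have haD : (i : ℕ) % D < D := Nat.mod_lt _ hD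
  obtain ⟨h1, h2⟩ := (Tf_mem_iff hD).1 hs
  have hDg : D ≤ g := by rw [hm]; calc D = D * 1 := by ring
                                       _ ≤ D * m := Nat.mul_le_mul_left _ hmpos
  have hr := rres_lt (a := (i : ℕ) % D) hD h2
  have hc := cres_lt (a := (i : ℕ) % D) (s := s % (D * D)) hD
  refine ⟨⟨rres D ((i : ℕ) % D) (s % (D * D)), by omega⟩,
          ⟨cres D ((i : ℕ) % D) (s % (D * D)), by omega⟩, ?_⟩
  rw [Qf_eq_some_iff]
  constructor
  · show (rres D ((i : ℕ) % D) (s % (D * D))) / D = (cres D ((i : ℕ) % D) (s % (D * D))) / D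
    rw [Nat.div_eq_of_lt hr, Nat.div_eq_of_lt hc]
  · show s = D * D * ((i : ℕ) / D) + lab D ((i : ℕ) % D)
      ((rres D ((i : ℕ) % D) (s % (D * D))) % D) ((cres D ((i : ℕ) % D) (s % (D * D))) % D)
    rw [Nat.mod_eq_of_lt hr, Nat.mod_eq_of_lt hc, lab_rres_cres hD haD h2, ← h1]
    exact (Nat.div_add_mod s (D * D)).symm

lemma fin_eq_of_div_mod {n d : ℕ} {x y : Fin n} (h1 : (x : ℕ) / d = (y : ℕ) / d)
    (h2 : (x : ℕ) % d = (y : ℕ) % d) : x = y := by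
  apply Fin.ext
  conv_lhs => rw [← Nat.div_add_mod (x : ℕ) d]
  conv_rhs => rw [← Nat.div_add_mod (y : ℕ) d]
  rw [h1, h2]

lemma Qf_blackburn (hD : 0 < D) (i : Fin b) (j₁ k₁ j₂ k₂ : Fin g) (s : ℕ)
    (hne : (j₁, k₁) ≠ (j₂, k₂)) (h1 : Qf D g b i j₁ k₁ = some s)
    (h2 : Qf D g b i j₂ k₂ = some s) :
    Qf D g b i j₁ k₂ = none ∧ Qf D g b i j₂ k₁ = none := by
  obtain ⟨e1, -, -, r1, c1⟩ := Qf_extract hD i j₁ k₁ s h1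
  obtain ⟨e2, -, -, r2, c2⟩ := Qf_extract hD i j₂ k₂ s h2
  have hvne : (j₁ : ℕ) / D ≠ (j₂ : ℕ) / D := by
    intro hv
    apply hne
    have hj : j₁ = j₂ := fin_eq_of_div_mod hv (by rw [r1, r2])
    have hk : k₁ = k₂ := fin_eq_of_div_mod (d := D) (by omega) (by rw [c1, c2])
    rw [hj, hk]
  constructor
  · unfold Qf
    rw [if_neg]
    omega
  · unfold Qf
    rw [if_neg]
    omega

lemma Qf_regular (hD : 0 < D) (hm : g = D * m) (i : Fin b) {s : ℕ}
    (hs : s ∈ Tf D b i) :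
    ((univ : Finset (Fin g × Fin g)).filter
      (fun jk => Qf D g b i jk.1 jk.2 = some s)).card = m := by
  have hDD : 0 < D * D := Nat.mul_pos hD hD
  have haD : (i : ℕ) % D < D := Nat.mod_lt _ hD
  obtain ⟨h1, h2⟩ := (Tf_mem_iff hD).1 hs
  set r := rres D ((i : ℕ) % D) (s % (D * D)) with hr
  set c := cres D ((i : ℕ) % D) (s % (D * D)) with hc
  have hrD : r < D := rres_lt hD h2
  have hcD : c < D := cres_lt hD
  have hchar : ∀ j k : Fin g, Qf D g b i j k = some s ↔
      ((j : ℕ) / D = (k : ℕ) / D ∧ (j : ℕ) % D = r ∧ (k : ℕ) % D = c) := by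
    intro j k
    constructor
    · intro h
      obtain ⟨e, -, -, rr, cc⟩ := Qf_extract hD i j k s h
      exact ⟨e, rr, cc⟩
    · rintro ⟨e, rr, cc⟩
      rw [Qf_eq_some_iff]
      refine ⟨e, ?_⟩
      rw [rr, cc, hr, hc, lab_rres_cres hD haD h2, ← h1]
      exact (Nat.div_add_mod s (D * D)).symm
  have key : ((univ : Finset (Fin g × Fin g)).filter
      (fun jk => Qf D g b i jk.1 jk.2 = some s)).card
      = ((univ : Finset (Fin m))).card := by
    have hlt : ∀ (w : Fin m) (e : ℕ), e < D → w * D + e < g := by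
      intro w e he
      have h1' : ((w : ℕ) + 1) * D = (w : ℕ) * D + D := by ring
      have h2' : ((w : ℕ) + 1) * D ≤ m * D := Nat.mul_le_mul_right D (by have := w.isLt; omega)
      have h3' : m * D = g := by rw [hm, Nat.mul_comm]
      omega
    apply Finset.card_nbij'
      (i := fun jk : Fin g × Fin g => (⟨(jk.1 : ℕ) / D, by
        have hlt2 := Nat.div_lt_div_of_lt_of_dvd (⟨m, hm⟩ : D ∣ g) jk.1.isLt
        have hgD : g / D = m := by rw [hm]; exact Nat.mul_div_cancel_left _ hD
        omega⟩ : Fin m))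
      (j := fun w : Fin m => ((⟨(w : ℕ) * D + r, hlt w r hrD⟩ : Fin g),
        (⟨(w : ℕ) * D + c, hlt w c hcD⟩ : Fin g)))
    · intro a _; exact Finset.mem_univ _
    · intro w _
      simp only [Finset.mem_coe, Finset.mem_filter, Finset.mem_univ, true_and]
      rw [hchar]
      refine ⟨?_, ?_, ?_⟩
      · show ((w : ℕ) * D + r) / D = ((w : ℕ) * D + c) / D
        rw [Nat.mul_comm (w : ℕ) D, Nat.mul_add_div hD, Nat.mul_add_div hD,
          Nat.div_eq_of_lt hrD, Nat.div_eq_of_lt hcD]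
      · show ((w : ℕ) * D + r) % D = r
        rw [Nat.mul_comm (w : ℕ) D, Nat.mul_add_mod, Nat.mod_eq_of_lt hrD]
      · show ((w : ℕ) * D + c) % D = c
        rw [Nat.mul_comm (w : ℕ) D, Nat.mul_add_mod, Nat.mod_eq_of_lt hcD]
    · intro jk hjk
      simp only [Finset.mem_coe, Finset.mem_filter, Finset.mem_univ, true_and] at hjk
      rw [hchar] at hjk
      obtain ⟨e, rr, cc⟩ := hjk
      have hj : ((jk.1 : ℕ) / D) * D + r = (jk.1 : ℕ) := by
        conv_rhs => rw [← Nat.div_add_mod (jk.1 : ℕ) D]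
        rw [rr, Nat.mul_comm]
      have hk : ((jk.1 : ℕ) / D) * D + c = (jk.2 : ℕ) := by
        conv_rhs => rw [← Nat.div_add_mod (jk.2 : ℕ) D]
        rw [cc, e, Nat.mul_comm]
      exact Prod.ext (Fin.ext hj) (Fin.ext hk)
    · intro w _
      apply Fin.ext
      show ((w : ℕ) * D + r) / D = (w : ℕ)
      rw [Nat.mul_comm (w : ℕ) D, Nat.mul_add_div hD, Nat.div_eq_of_lt hrD]
      omega
  rw [key]; simp

lemma Qf_compat (hD : 0 < D) {i i' : Fin b} (hne : i ≠ i') :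
    BBCompat (Qf D g b i) (Qf D g b i') (Ig g (b * D)) := by
  intro j₀ k₀ j₁ k₁ s h0 h1
  obtain ⟨-, d0, -, r0, c0⟩ := Qf_extract hD i j₀ k₀ s h0
  obtain ⟨-, d1, -, r1, c1⟩ := Qf_extract hD i' j₁ k₁ s h1
  have hdiv : (i : ℕ) / D = (i' : ℕ) / D := by omega
  have hmod : (i : ℕ) % D ≠ (i' : ℕ) % D := by
    intro hmm
    exact hne (fin_eq_of_div_mod hdiv hmm)
  have haD : (i : ℕ) % D < D := Nat.mod_lt _ hD
  have haD' : (i' : ℕ) % D < D := Nat.mod_lt _ hD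
  constructor
  · unfold Ig
    rw [if_neg]
    intro he
    have : (j₀ : ℕ) % D = (k₁ : ℕ) % D := by rw [he]
    rw [r0, c1] at this
    exact rres_ne_cres hD haD haD' hmod this
  · unfold Ig
    rw [if_neg]
    intro he
    have : (j₁ : ℕ) % D = (k₀ : ℕ) % D := by rw [he]
    rw [r1, c0] at this
    exact rres_ne_cres hD haD' haD (Ne.symm hmod) this


/-! ### Properties of `τf` and `Lf` -/

lemma τf_inj_nat (hb : 0 < b) {i j i' j' : Fin b} (h : τf D b i j = τf D b i' j') :
    i = i' ∧ j = j' := by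
  unfold τf at h
  have h2 : (i : ℕ) * b + (j : ℕ) = (i' : ℕ) * b + (j' : ℕ) := by omega
  have key : ∀ u v : Fin b, ((u : ℕ) * b + (v : ℕ)) / b = (u : ℕ) ∧
      ((u : ℕ) * b + (v : ℕ)) % b = (v : ℕ) := by
    intro u v
    constructor
    · rw [Nat.mul_comm (u : ℕ) b, Nat.mul_add_div hb, Nat.div_eq_of_lt v.isLt]
      omega
    · rw [Nat.mul_comm (u : ℕ) b, Nat.mul_add_mod, Nat.mod_eq_of_lt v.isLt]
  obtain ⟨d1, m1⟩ := key i j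
  obtain ⟨d2, m2⟩ := key i' j'
  constructor
  · apply Fin.ext; rw [← d1, ← d2, h2]
  · apply Fin.ext; rw [← m1, ← m2, h2]

lemma τf_ge (i j : Fin b) : b * D + 1 ≤ τf D b i j := by unfold τf; omega

lemma blk_in_eq {x x' : Fin (b * g)} (h1 : blkIdx x = blkIdx x') (h2 : inIdx x = inIdx x') :
    x = x' := by
  have h1' : (x : ℕ) / g = (x' : ℕ) / g := congrArg Fin.val h1
  have h2' : (x : ℕ) % g = (x' : ℕ) % g := congrArg Fin.val h2
  exact fin_eq_of_div_mod h1' h2'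

lemma arith1 (hb : 0 < b) (hg : 0 < g) (hDg : D ≤ g) :
    (g - D) + (b - 1) * (g - 1) = b * g - (b + D - 1) := by
  obtain ⟨b', rfl⟩ : ∃ b', b = b' + 1 := ⟨b - 1, by omega⟩
  obtain ⟨g', rfl⟩ : ∃ g', g = g' + 1 := ⟨g - 1, by omega⟩
  have h1 : (b' + 1) * (g' + 1) = b' * g' + b' + g' + 1 := by ring
  simp only [Nat.add_sub_cancel]
  omega

lemma colStars_Lf (hD : 0 < D) (hg : 0 < g) (hb : 0 < b) (hm : g = D * m)
    (hmpos : 0 < m) (y : Fin (b * g)) :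
    colStars (Lf D g b) y = b * g - (b + D - 1) := by
  unfold colStars
  rw [← card_filter_equiv ((toPair (b := b) (g := g) hg).symm) (fun x => Lf D g b x y = none)]
  have hfc : (univ.filter fun p : Fin b × Fin g => Lf D g b ((toPair hg).symm p) y = none)
      = univ.filter fun p : Fin b × Fin g =>
          (if p.1 = blkIdx y then Qf D g b p.1 p.2 (inIdx y) = none
           else ¬ (p.2 = inIdx y)) := by
    apply Finset.filter_congr
    intro p _
    unfold Lf
    rw [blk_toPair, in_toPair]
    by_cases h : p.1 = blkIdx y
    · simp [h]
    · simp only [if_neg h]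
      by_cases h2 : p.2 = inIdx y <;> simp [h2]
  rw [hfc, card_filter_prod (P := fun (i : Fin b) (v : Fin g) =>
    if i = blkIdx y then Qf D g b i v (inIdx y) = none else ¬ (v = inIdx y))]
  rw [← Finset.add_sum_erase _ _ (Finset.mem_univ (blkIdx y))]
  have hmain : (univ.filter fun v : Fin g =>
      (if blkIdx y = blkIdx y then Qf D g b (blkIdx y) v (inIdx y) = none
        else ¬ (v = inIdx y))).card = g - D := by
    have hcs := colStars_Qf (b := b) hD hm (blkIdx y) (inIdx y)
    unfold colStars at hcs
    rw [← hcs]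
    apply Finset.card_nbij' id id <;> intro a ha <;> simp_all
  have hoff : ∀ i : Fin b, i ≠ blkIdx y → (univ.filter fun v : Fin g =>
      (if i = blkIdx y then Qf D g b i v (inIdx y) = none
        else ¬ (v = inIdx y))).card = g - 1 := by
    intro i hi
    have hfc2 : (univ.filter fun v : Fin g =>
        (if i = blkIdx y then Qf D g b i v (inIdx y) = none else ¬ (v = inIdx y)))
        = univ.filter fun v : Fin g => ¬ (v = inIdx y) := by
      apply Finset.filter_congr
      intro v _
      simp [if_neg hi]
    rw [hfc2]
    have hone : (univ.filter fun v : Fin g => v = inIdx y).card = 1 := by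
      rw [Finset.filter_eq']
      simp
    have hsplit := Finset.card_filter_add_card_filter_not
      (s := (univ : Finset (Fin g))) (p := fun v : Fin g => v = inIdx y)
    simp only [Finset.card_univ, Fintype.card_fin] at hsplit
    omega
  rw [hmain]
  have hsum : ∑ i ∈ Finset.univ.erase (blkIdx y), (univ.filter fun v : Fin g =>
      (if i = blkIdx y then Qf D g b i v (inIdx y) = none
        else ¬ (v = inIdx y))).card = (b - 1) * (g - 1) := by
    rw [Finset.sum_congr rfl fun i hi => hoff i (Finset.ne_of_mem_erase hi)]
    rw [Finset.sum_const, Finset.card_erase_of_mem (Finset.mem_univ _)]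
    simp [Nat.mul_comm]
  rw [hsum]
  have hDg : D ≤ g := by
    rw [hm]
    calc D = D * 1 := by ring
      _ ≤ D * m := Nat.mul_le_mul_left _ hmpos
  exact arith1 hb hg hDg

lemma Lf_entries_mem (hD : 0 < D) (hB : b = D * B) (x y : Fin (b * g)) (s : ℕ)
    (h : Lf D g b x y = some s) : s ∈ SLf D b := by
  unfold Lf at h
  split at h
  · have h1 := Qf_val_mem hD _ _ _ _ h
    have h2 := Tf_lt hD hB h1
    exact Finset.mem_union_left _ (Finset.mem_range.2 h2)
  · split at h
    · apply Finset.mem_union_right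
      apply Finset.mem_image.2
      refine ⟨(blkIdx x, blkIdx y), ?_, Option.some.inj h⟩
      simp only [Finset.mem_filter, Finset.mem_univ, true_and]
      assumption
    · exact absurd h (by simp)

lemma Lf_surj (hD : 0 < D) (hg : 0 < g) (hm : g = D * m) (hB : b = D * B)
    (hmpos : 0 < m) (s : ℕ) (hs : s ∈ SLf D b) :
    ∃ x y, Lf D g b x y = some s := by
  have hDD : 0 < D * D := Nat.mul_pos hD hD
  rcases Finset.mem_union.1 hs with hs | hs
  · -- diagonal-type integer
    have hsbD := Finset.mem_range.1 hs
    have hcB : s / (D * D) < B := by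
      apply Nat.div_lt_of_lt_mul
      have hbd : b * D = D * D * B := by rw [hB]; ring
      exact hbd ▸ hsbD
    have hib : s / (D * D) * D < b := by
      have h1 : (s / (D * D) + 1) * D ≤ B * D := Nat.mul_le_mul_right D (by omega)
      have h2 : B * D = b := by rw [hB, Nat.mul_comm]
      have h3 : (s / (D * D) + 1) * D = s / (D * D) * D + D := by ring
      omega
    set i : Fin b := ⟨s / (D * D) * D, hib⟩ with hidef
    have hiD : (i : ℕ) / D = s / (D * D) := by
      show s / (D * D) * D / D = s / (D * D)
      rw [Nat.mul_div_cancel _ hD]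
    have hsT : s ∈ Tf D b i := by
      rw [Tf_mem_iff hD]
      exact ⟨by rw [hiD], Nat.mod_lt _ hDD⟩
    obtain ⟨j, k, hjk⟩ := Qf_surj hD hm hmpos i hsT
    refine ⟨(toPair hg).symm (i, j), (toPair hg).symm (i, k), ?_⟩
    unfold Lf
    rw [blk_toPair, in_toPair, blk_toPair, in_toPair]
    simpa using hjk
  · obtain ⟨p, hp, rfl⟩ := Finset.mem_image.1 hs
    simp only [Finset.mem_filter, Finset.mem_univ, true_and] at hp
    refine ⟨(toPair hg).symm (p.1, ⟨0, hg⟩), (toPair hg).symm (p.2, ⟨0, hg⟩), ?_⟩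
    unfold Lf
    rw [blk_toPair, in_toPair, blk_toPair, in_toPair]
    rw [if_neg hp]
    simp

lemma Lf_blackburn (hD : 0 < D) (hB : b = D * B) (hb : 0 < b)
    (x₁ y₁ x₂ y₂ : Fin (b * g)) (s : ℕ) (hne : (x₁, y₁) ≠ (x₂, y₂))
    (h1 : Lf D g b x₁ y₁ = some s) (h2 : Lf D g b x₂ y₂ = some s) :
    Lf D g b x₁ y₂ = none ∧ Lf D g b x₂ y₁ = none := by
  unfold Lf at h1 h2 ⊢
  by_cases c1 : blkIdx x₁ = blkIdx y₁
  · rw [if_pos c1] at h1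
    by_cases c2 : blkIdx x₂ = blkIdx y₂
    · rw [if_pos c2] at h2
      -- both diagonal
      obtain ⟨-, d1, -, r1, cc1⟩ := Qf_extract hD _ _ _ _ h1
      obtain ⟨-, d2, -, r2, cc2⟩ := Qf_extract hD _ _ _ _ h2
      by_cases hbb : blkIdx x₁ = blkIdx x₂
      · -- same block
        have hby : blkIdx y₂ = blkIdx x₁ := by rw [← c2, ← hbb]
        have hby1 : blkIdx y₁ = blkIdx x₂ := by rw [← c1, hbb]
        have hpair : ((inIdx x₁, inIdx y₁) : Fin g × Fin g) ≠ (inIdx x₂, inIdx y₂) := by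
          intro hp
          apply hne
          have hx : x₁ = x₂ := blk_in_eq hbb (congrArg Prod.fst hp)
          have hy : y₁ = y₂ := blk_in_eq (by rw [← c1, ← c2, hbb]) (congrArg Prod.snd hp)
          rw [hx, hy]
        have h2' : Qf D g b (blkIdx x₁) (inIdx x₂) (inIdx y₂) = some s := by
          rw [hbb]; exact h2
        obtain ⟨hc1, hc2⟩ := Qf_blackburn hD (blkIdx x₁) _ _ _ _ s hpair h1 h2'
        constructor
        · rw [if_pos hby.symm]
          exact hc1
        · rw [if_pos hby1.symm, ← hbb]
          exact hc2
      · -- distinct blocks, same copy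
        have hdd : (blkIdx x₁ : ℕ) / D = (blkIdx x₂ : ℕ) / D := by omega
        have hmm : (blkIdx x₁ : ℕ) % D ≠ (blkIdx x₂ : ℕ) % D := by
          intro hm'
          exact hbb (fin_eq_of_div_mod hdd hm')
        have haD : (blkIdx x₁ : ℕ) % D < D := Nat.mod_lt _ hD
        have haD' : (blkIdx x₂ : ℕ) % D < D := Nat.mod_lt _ hD
        constructor
        · rw [if_neg (by rw [← c2]; exact hbb)]
          rw [if_neg]
          intro he
          have : (inIdx x₁ : ℕ) % D = (inIdx y₂ : ℕ) % D := by rw [he]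
          rw [r1, cc2] at this
          exact rres_ne_cres hD haD haD' hmm this
        · rw [if_neg (by rw [← c1]; exact Ne.symm hbb)]
          rw [if_neg]
          intro he
          have : (inIdx x₂ : ℕ) % D = (inIdx y₁ : ℕ) % D := by rw [he]
          rw [r2, cc1] at this
          exact rres_ne_cres hD haD' haD (Ne.symm hmm) this
    · -- h1 diagonal, h2 off-diagonal: impossible
      rw [if_neg c2] at h2
      split at h2
      · exfalso
        have hs1 := Tf_lt hD hB (Qf_val_mem hD _ _ _ _ h1)
        have hg2 := τf_ge (D := D) (blkIdx x₂) (blkIdx y₂)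
        have hseq := Option.some.inj h2
        omega
      · exact absurd h2 (by simp)
  · rw [if_neg c1] at h1
    by_cases c2 : blkIdx x₂ = blkIdx y₂
    · rw [if_pos c2] at h2
      split at h1
      · exfalso
        have hs1 := Tf_lt hD hB (Qf_val_mem hD _ _ _ _ h2)
        have hg2 := τf_ge (D := D) (blkIdx x₁) (blkIdx y₁)
        have hseq := Option.some.inj h1
        omega
      · exact absurd h1 (by simp)
    · rw [if_neg c2] at h2
      -- both off-diagonal
      have hv1 : inIdx x₁ = inIdx y₁ := by
        by_contra hv
        rw [if_neg hv] at h1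
        exact absurd h1 (by simp)
      rw [if_pos hv1] at h1
      have hv2 : inIdx x₂ = inIdx y₂ := by
        by_contra hv
        rw [if_neg hv] at h2
        exact absurd h2 (by simp)
      rw [if_pos hv2] at h2
      have hs1 : τf D b (blkIdx x₁) (blkIdx y₁) = s := Option.some.inj h1
      have hs2 : τf D b (blkIdx x₂) (blkIdx y₂) = s := Option.some.inj h2
      obtain ⟨hbx, hby⟩ := τf_inj_nat (D := D) hb (hs1.trans hs2.symm)
      have hvne : inIdx x₁ ≠ inIdx x₂ := by
        intro hv
        apply hne
        have hx : x₁ = x₂ := blk_in_eq hbx hv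
        have hy : y₁ = y₂ := blk_in_eq hby (by rw [← hv1, ← hv2, hv])
        rw [hx, hy]
      constructor
      · rw [if_neg (show ¬ blkIdx x₁ = blkIdx y₂ from fun hh => c1 (hh.trans hby.symm))]
        rw [if_neg (show ¬ inIdx x₁ = inIdx y₂ from fun hh => hvne (hh.trans hv2.symm))]
      · rw [if_neg (show ¬ blkIdx x₂ = blkIdx y₁ from fun hh => c1 (hbx.trans hh))]
        rw [if_neg (show ¬ inIdx x₂ = inIdx y₁ from fun hh => hvne (hh.trans hv1.symm).symm)]


def E4 {D : ℕ} (hg : 0 < g) (_hD : 0 < D) :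
    Fin (b * g) × Fin (b * g) ≃ (Fin b × Fin b) × (Fin g × Fin g) where
  toFun q := ((blkIdx q.1, blkIdx q.2), (inIdx q.1, inIdx q.2))
  invFun p := ((toPair hg).symm (p.1.1, p.2.1), (toPair hg).symm (p.1.2, p.2.2))
  left_inv q := by
    apply Prod.ext
    · show (toPair hg).symm (blkIdx q.1, inIdx q.1) = q.1
      exact (toPair hg).left_inv q.1
    · show (toPair hg).symm (blkIdx q.2, inIdx q.2) = q.2
      exact (toPair hg).left_inv q.2
  right_inv p := by
    apply Prod.ext
    · apply Prod.ext
      · exact blk_toPair hg _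
      · exact blk_toPair hg _
    · apply Prod.ext
      · exact in_toPair hg _
      · exact in_toPair hg _

lemma Lf_count (hD : 0 < D) (hg : 0 < g) (hb : 0 < b) (hm : g = D * m) (hB : b = D * B)
    (hmpos : 0 < m) (s : ℕ) (hs : s ∈ SLf D b) :
    ((univ : Finset (Fin (b * g) × Fin (b * g))).filter
      (fun jk => Lf D g b jk.1 jk.2 = some s)).card = g := by
  have hDD : 0 < D * D := Nat.mul_pos hD hD
  rw [← card_filter_equiv ((E4 hg hD).symm) (fun jk => Lf D g b jk.1 jk.2 = some s)]
  have hsymm : ∀ p : (Fin b × Fin b) × (Fin g × Fin g),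
      (E4 (b := b) hg hD).symm p
        = ((toPair hg).symm (p.1.1, p.2.1), (toPair hg).symm (p.1.2, p.2.2)) := fun p => rfl
  have hfc : (univ.filter fun p : (Fin b × Fin b) × (Fin g × Fin g) =>
        Lf D g b ((E4 hg hD).symm p).1 ((E4 hg hD).symm p).2 = some s)
      = univ.filter fun p : (Fin b × Fin b) × (Fin g × Fin g) =>
          (if p.1.1 = p.1.2 then Qf D g b p.1.1 p.2.1 p.2.2 = some s
           else p.2.1 = p.2.2 ∧ τf D b p.1.1 p.1.2 = s) := by
    apply Finset.filter_congr
    intro p _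
    rw [hsymm]
    unfold Lf
    simp only [blk_toPair, in_toPair]
    by_cases h : p.1.1 = p.1.2
    · simp [h]
    · simp only [if_neg h]
      by_cases h2 : p.2.1 = p.2.2
      · simp [h2, eq_comm]
      · simp [h2]
  rw [hfc, card_filter_prod (P := fun (ii : Fin b × Fin b) (vv : Fin g × Fin g) =>
    if ii.1 = ii.2 then Qf D g b ii.1 vv.1 vv.2 = some s
    else vv.1 = vv.2 ∧ τf D b ii.1 ii.2 = s)]
  rcases Finset.mem_union.1 hs with hsd | hst
  · -- diagonal-type
    have hsbD := Finset.mem_range.1 hsd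
    have hinner : ∀ ii : Fin b × Fin b,
        ((univ : Finset (Fin g × Fin g)).filter fun vv =>
          (if ii.1 = ii.2 then Qf D g b ii.1 vv.1 vv.2 = some s
           else vv.1 = vv.2 ∧ τf D b ii.1 ii.2 = s)).card
        = if ii.1 = ii.2 ∧ (ii.1 : ℕ) / D = s / (D * D) then m else 0 := by
      intro ii
      by_cases h : ii.1 = ii.2
      · by_cases h2 : (ii.1 : ℕ) / D = s / (D * D)
        · rw [if_pos ⟨h, h2⟩]
          have hsT : s ∈ Tf D b ii.1 := by
            rw [Tf_mem_iff hD]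
            exact ⟨h2.symm, Nat.mod_lt _ hDD⟩
          have := Qf_regular (b := b) hD hm ii.1 hsT
          rw [← this]
          apply Finset.card_nbij' id id <;> intro a ha <;> simp_all
        · rw [if_neg (by tauto)]
          rw [Finset.card_eq_zero, Finset.filter_eq_empty_iff]
          intro vv _
          rw [if_pos h]
          intro hQ
          obtain ⟨-, hd, -, -, -⟩ := Qf_extract hD _ _ _ _ hQ
          exact h2 (by omega)
      · rw [if_neg (by tauto)]
        rw [Finset.card_eq_zero, Finset.filter_eq_empty_iff]
        intro vv _
        rw [if_neg h]
        rintro ⟨-, hτ⟩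
        have := τf_ge (D := D) ii.1 ii.2
        omega
    rw [Finset.sum_congr rfl fun ii _ => hinner ii]
    rw [Fintype.sum_prod_type]
    have hrow : ∀ i : Fin b, (∑ i' : Fin b,
        if i = i' ∧ (i : ℕ) / D = s / (D * D) then m else 0)
        = if (i : ℕ) / D = s / (D * D) then m else 0 := by
      intro i
      have hconv : ∀ i' : Fin b, (if i = i' ∧ (i : ℕ) / D = s / (D * D) then m else 0)
          = if i' = i then (if (i : ℕ) / D = s / (D * D) then m else 0) else 0 := by
        intro i'
        by_cases h : i' = i
        · subst h
          simp
        · rw [if_neg h, if_neg (fun hc => h hc.1.symm)]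
      rw [Finset.sum_congr rfl fun i' _ => hconv i']
      rw [Finset.sum_ite_eq' univ i (fun _ => if (i : ℕ) / D = s / (D * D) then m else 0)]
      simp
    rw [Finset.sum_congr rfl fun i _ => hrow i]
    have hfin : (∑ i : Fin b, if (i : ℕ) / D = s / (D * D) then m else 0)
        = ((univ : Finset (Fin b)).filter fun i : Fin b => (i : ℕ) / D = s / (D * D)).card * m := by
      rw [← Finset.sum_filter, Finset.sum_const, smul_eq_mul]
    rw [hfin]
    have hcB : s / (D * D) < B := by
      apply Nat.div_lt_of_lt_mul
      have hbd : b * D = D * D * B := by rw [hB]; ring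
      exact hbd ▸ hsbD
    rw [card_res (s / (D * D)) hD hB hcB]
    rw [← hm]
  · -- τ-type
    obtain ⟨p0, hp0, hp0s⟩ := Finset.mem_image.1 hst
    simp only [Finset.mem_filter, Finset.mem_univ, true_and] at hp0
    have hinner : ∀ ii : Fin b × Fin b,
        ((univ : Finset (Fin g × Fin g)).filter fun vv =>
          (if ii.1 = ii.2 then Qf D g b ii.1 vv.1 vv.2 = some s
           else vv.1 = vv.2 ∧ τf D b ii.1 ii.2 = s)).card
        = if ii = p0 then g else 0 := by
      intro ii
      by_cases h : ii.1 = ii.2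
      · have hne : ¬ ii = p0 := by
          intro he
          rw [he] at h
          exact hp0 h
        rw [if_neg hne, Finset.card_eq_zero, Finset.filter_eq_empty_iff]
        intro vv _
        rw [if_pos h]
        intro hQ
        have hlt := Tf_lt hD hB (Qf_val_mem hD _ _ _ _ hQ)
        have hge := τf_ge (D := D) p0.1 p0.2
        omega
      · by_cases h2 : ii = p0
        · rw [if_pos h2, h2]
          have hset : ((univ : Finset (Fin g × Fin g)).filter fun vv =>
              (if p0.1 = p0.2 then Qf D g b p0.1 vv.1 vv.2 = some s
               else vv.1 = vv.2 ∧ τf D b p0.1 p0.2 = s))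
              = (univ : Finset (Fin g × Fin g)).filter fun vv => vv.1 = vv.2 := by
            apply Finset.filter_congr
            intro vv _
            rw [if_neg hp0]
            simp [hp0s]
          rw [hset, card_diag]
        · rw [if_neg h2, Finset.card_eq_zero, Finset.filter_eq_empty_iff]
          intro vv _
          rw [if_neg h]
          rintro ⟨-, hτ⟩
          apply h2
          obtain ⟨e1, e2⟩ := τf_inj_nat (D := D) hb (hτ.trans hp0s.symm)
          exact Prod.ext e1 e2
    rw [Finset.sum_congr rfl fun ii _ => hinner ii]
    rw [Finset.sum_ite_eq' univ p0 (fun _ => g)]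
    simp

lemma SLf_card (hD : 0 < D) (hb : 0 < b) : (SLf D b).card = b * (b + D - 1) := by
  unfold SLf
  rw [Finset.card_union_of_disjoint]
  · rw [Finset.card_range, Finset.card_image_of_injOn (fun p _ q _ h => by
      obtain ⟨e1, e2⟩ := τf_inj_nat (D := D) hb h
      exact Prod.ext e1 e2)]
    have hdiag : ((univ : Finset (Fin b × Fin b)).filter fun p => p.1 = p.2).card = b :=
      card_diag
    have hsplit := Finset.card_filter_add_card_filter_not
      (s := (univ : Finset (Fin b × Fin b))) (p := fun p : Fin b × Fin b => p.1 = p.2)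
    simp only [Finset.card_univ, Fintype.card_prod, Fintype.card_fin] at hsplit
    have hfe : ((univ : Finset (Fin b × Fin b)).filter fun p => ¬ p.1 = p.2).card
        = b * b - b := by omega
    rw [hfe]
    obtain ⟨b', rfl⟩ : ∃ b', b = b' + 1 := ⟨b - 1, by omega⟩
    obtain ⟨D', rfl⟩ : ∃ D', D = D' + 1 := ⟨D - 1, by omega⟩
    have h1 : (b' + 1) * (D' + 1) = b' * D' + b' + D' + 1 := by ring
    have h2 : (b' + 1) * (b' + 1) = b' * b' + 2 * b' + 1 := by ring
    have h3 : (b' + 1) * (b' + 1 + (D' + 1) - 1) = b' * b' + b' * D' + 2 * b' + D' + 1 := by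
      have : b' + 1 + (D' + 1) - 1 = b' + D' + 1 := by omega
      rw [this]; ring
    omega
  · rw [Finset.disjoint_left]
    intro a ha hb'
    obtain ⟨p, -, rfl⟩ := Finset.mem_image.1 hb'
    have := τf_ge (D := D) p.1 p.2
    have := Finset.mem_range.1 ha
    omega

end Stmt15Aux

/-- **Tiling lifting parameters.** For positive integers `g, b` with
`d = gcd(g, b)`, there exist `b` `(g, g, g−d, d²)` `(g/d)`-regular PDAs which are
pairwise Blackburn-compatible w.r.t. `I_g(t)` for some `t` occurring in none of them,
such that the lifting of `I_b` by this set — the compatible PDAs on the diagonal blocks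
and integer-disjoint copies of `I_g` (with fresh distinct integers `τ i j`) on the
off-diagonal blocks — is a `g`-regular `(bg, bg, bg − b − d + 1, b(b + d − 1))` PDA. -/
theorem stmt_15 (g b : ℕ) (hg : 0 < g) (hb : 0 < b) :
    ∃ (Q : Fin b → Fin g → Fin g → Option ℕ) (T : Fin b → Finset ℕ)
      (t : ℕ) (τ : Fin b → Fin b → ℕ) (SL : Finset ℕ),
      (∀ i, IsPDA (Q i) (g - Nat.gcd g b) (T i)) ∧
      (∀ i, (T i).card = Nat.gcd g b * Nat.gcd g b) ∧
      (∀ i, IsRegularPDA (Q i) (T i) (g / Nat.gcd g b)) ∧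
      (∀ i, t ∉ T i) ∧
      (∀ i i', i ≠ i' → BBCompat (Q i) (Q i') (Ig g t)) ∧
      (Function.Injective fun p : Fin b × Fin b => τ p.1 p.2) ∧
      (∀ i j k, τ i j ∉ T k) ∧
      IsPDA
        (fun x y : Fin (b * g) =>
          if blkIdx x = blkIdx y then Q (blkIdx x) (inIdx x) (inIdx y)
          else if inIdx x = inIdx y then some (τ (blkIdx x) (blkIdx y)) else none)
        (b * g - (b + Nat.gcd g b - 1)) SL ∧
      IsRegularPDA
        (fun x y : Fin (b * g) =>
          if blkIdx x = blkIdx y then Q (blkIdx x) (inIdx x) (inIdx y)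
          else if inIdx x = inIdx y then some (τ (blkIdx x) (blkIdx y)) else none)
        SL g ∧
      SL.card = b * (b + Nat.gcd g b - 1) := by
  have hD : 0 < Nat.gcd g b := Nat.gcd_pos_of_pos_left b hg
  obtain ⟨m, hm⟩ := Nat.gcd_dvd_left g b
  obtain ⟨B, hB⟩ := Nat.gcd_dvd_right g b
  set D := Nat.gcd g b with hDdef
  have hmpos : 0 < m := by
    rcases Nat.eq_zero_or_pos m with h | h
    · rw [h, Nat.mul_zero] at hm; omega
    · exact h
  refine ⟨Stmt15Aux.Qf D g b, Stmt15Aux.Tf D b, b * D, Stmt15Aux.τf D b, Stmt15Aux.SLf D b,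
    ?_, ?_, ?_, ?_, ?_, ?_, ?_, ?_, ?_, ?_⟩
  · intro i
    exact ⟨fun k => Stmt15Aux.colStars_Qf hD hm i k,
           fun s hs => Stmt15Aux.Qf_surj hD hm hmpos i hs,
           fun j k s h => Stmt15Aux.Qf_val_mem hD i j k s h,
           fun j₁ k₁ j₂ k₂ s hne h1 h2 => Stmt15Aux.Qf_blackburn hD i j₁ k₁ j₂ k₂ s hne h1 h2⟩
  · intro i; exact Stmt15Aux.Tf_card hD i
  · intro i
    have hgD : g / D = m := by rw [hm, Nat.mul_div_cancel_left _ hD]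
    rw [hgD]
    intro s hs
    exact Stmt15Aux.Qf_regular hD hm i hs
  · intro i hmem
    have := Stmt15Aux.Tf_lt hD hB hmem
    omega
  · intro i i' hne
    exact Stmt15Aux.Qf_compat hD hne
  · intro p q h
    obtain ⟨e1, e2⟩ := Stmt15Aux.τf_inj_nat (D := D) hb h
    exact Prod.ext e1 e2
  · intro i j k hmem
    have h1 := Stmt15Aux.Tf_lt hD hB hmem
    have h2 := Stmt15Aux.τf_ge (D := D) i j
    omega
  · exact ⟨fun y => Stmt15Aux.colStars_Lf hD hg hb hm hmpos y,
           fun s hs => Stmt15Aux.Lf_surj hD hg hm hB hmpos s hs,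
           fun x y s h => Stmt15Aux.Lf_entries_mem hD hB x y s h,
           fun x₁ y₁ x₂ y₂ s hne h1 h2 =>
             Stmt15Aux.Lf_blackburn hD hB hb x₁ y₁ x₂ y₂ s hne h1 h2⟩
  · intro s hs
    exact Stmt15Aux.Lf_count hD hg hb hm hB hmpos s hs
  · exact Stmt15Aux.SLf_card hD hb
end
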